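/- arXiv:1103.1143 — 2 statements merged into one kernel-verified Lean document; each statement's English description precedes it below -/
import Mathlib

section
/- For every t ≥ 0, P(σ_1 + σ_2 + ⋯ + σ_N > t/κ) ≤ e^{−t}/(1 − (e^{κT} − 1)). -/
open MeasureTheory ProbabilityTheory Finset Real

/-!
Cut the event according to the index `k + 1 = N`. On it, `σ_1, …, σ_k ≤ T`, so the sum exceeds
`t/κ` only if `σ_{k+1} > max (T, t/κ - kT)`. By independence this has probability
`(1 - e^{-κT})^k e^{-κ max (T, t/κ - kT)} ≤ e^{-t} (e^{κT} - 1)^k`, and the union bound leaves a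
geometric series of ratio `e^{κT} - 1 < 1`.
-/

theorem exists_forall_le_and_max_lt_of_lt_sum_Icc {x : ℕ → ℝ} {T c : ℝ} {n : ℕ} (hn : 1 ≤ n)
    (hle : ∀ i, 1 ≤ i → i < n → x i ≤ T) (hlt : T < x n) (hc : c < ∑ i ∈ Icc 1 n, x i) :
    ∃ k : ℕ, (∀ i ∈ Icc 1 k, x i ≤ T) ∧ max T (c - k * T) < x (k + 1) := by
  obtain ⟨k, rfl⟩ : ∃ k, n = k + 1 := ⟨n - 1, by omega⟩
  have hprefix : ∀ i ∈ Icc 1 k, x i ≤ T := fun i hi ↦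
    hle i (mem_Icc.1 hi).1 (Nat.lt_succ_of_le (mem_Icc.1 hi).2)
  have hsum_prefix : ∑ i ∈ Icc 1 k, x i ≤ k * T := by
    simpa using sum_le_sum hprefix
  rw [sum_Icc_succ_top (by omega)] at hc
  exact ⟨k, hprefix, max_lt hlt (by linarith)⟩

theorem ProbabilityTheory.iIndepFun.measure_biInter_preimage_inter_preimage
    {Ω ι β : Type*} [MeasurableSpace Ω] [MeasurableSpace β] {P : Measure Ω} {X : ι → Ω → β}
    (hX : iIndepFun X P) {S : Finset ι} {i : ι} (hi : i ∉ S) {A B : Set β}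
    (hA : MeasurableSet A) (hB : MeasurableSet B) :
    P ((⋂ j ∈ S, X j ⁻¹' A) ∩ X i ⁻¹' B) = (∏ j ∈ S, P (X j ⁻¹' A)) * P (X i ⁻¹' B) := by
  classical
  have h := hX.measure_inter_preimage_eq_mul (insert i S)
    (sets := Function.update (fun _ ↦ A) i B) fun j _ ↦ by
      by_cases hj : j = i <;> simp [hj, hA, hB]
  have hS : ∀ j ∈ S, Function.update (fun _ ↦ A) i B j = A := fun j hj ↦
    Function.update_of_ne (ne_of_mem_of_not_mem hj hi) _ _
  rw [set_biInter_insert, prod_insert hi, Function.update_self, Set.inter_comm, mul_comm,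
    prod_congr rfl fun j hj ↦ by rw [hS j hj]] at h
  rwa [Set.iInter₂_congr fun j hj ↦ by rw [hS j hj]] at h

theorem one_sub_exp_neg_nonneg {x : ℝ} (hx : 0 ≤ x) : 0 ≤ 1 - exp (-x) := by
  simpa using exp_le_one_iff.2 (neg_nonpos.2 hx)

theorem one_sub_exp_neg_pow_mul_exp_neg_le {κ T : ℝ} (hκ : 0 < κ) (hT : 0 ≤ T) (c : ℝ) (k : ℕ) :
    (1 - exp (-(κ * T))) ^ k * exp (-(κ * max T (c / κ - k * T)))
      ≤ exp (-c) * (exp (κ * T) - 1) ^ k := by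
  have hbase := one_sub_exp_neg_nonneg (mul_nonneg hκ.le hT)
  have hexponent : -(κ * max T (c / κ - k * T)) ≤ -c + k * (κ * T) := by
    have := mul_le_mul_of_nonneg_left (le_max_right T (c / κ - k * T)) hκ.le
    rw [mul_sub, mul_div_cancel₀ c hκ.ne'] at this
    linarith
  calc (1 - exp (-(κ * T))) ^ k * exp (-(κ * max T (c / κ - k * T)))
      ≤ (1 - exp (-(κ * T))) ^ k * exp (-c + k * (κ * T)) := by gcongr
    _ = exp (-c) * ((1 - exp (-(κ * T))) * exp (κ * T)) ^ k := by
      rw [exp_add, mul_pow, exp_nat_mul]; ring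
    _ = exp (-c) * (exp (κ * T) - 1) ^ k := by
      rw [sub_mul, one_mul, ← exp_add, neg_add_cancel, exp_zero]

theorem tsum_ofReal_mul_geometric {c r : ℝ} (hc : 0 ≤ c) (hr₀ : 0 ≤ r) (hr₁ : r < 1) :
    ∑' k : ℕ, ENNReal.ofReal (c * r ^ k) = ENNReal.ofReal (c / (1 - r)) := by
  rw [← ENNReal.ofReal_tsum_of_nonneg (fun k ↦ by positivity)
    ((summable_geometric_of_lt_one hr₀ hr₁).mul_left c), tsum_mul_left,
    tsum_geometric_of_lt_one hr₀ hr₁, div_eq_mul_inv]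

section Exponential

variable {Ω : Type*} [MeasurableSpace Ω] {P : Measure Ω} [IsProbabilityMeasure P] {κ : ℝ}

theorem measure_preimage_Iic_of_exponential {X : Ω → ℝ} (hX : Measurable X)
    (hexp : ∀ s : ℝ, P {ω | s < X ω} = ENNReal.ofReal (exp (-(κ * max s 0)))) {s : ℝ}
    (hs : 0 ≤ s) :
    P (X ⁻¹' Set.Iic s) = ENNReal.ofReal (1 - exp (-(κ * s))) := by
  have hcompl : X ⁻¹' Set.Iic s = {ω | s < X ω}ᶜ := by ext; simp
  rw [hcompl, prob_compl_eq_one_sub (measurableSet_lt measurable_const hX), hexp,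
    max_eq_left hs, ← ENNReal.ofReal_one, ← ENNReal.ofReal_sub _ (exp_nonneg _)]

theorem measure_forall_le_and_lt_le_of_exponential {σ : ℕ → Ω → ℝ} (hκ : 0 < κ)
    (hmeas : ∀ i, Measurable (σ i)) (hindep : iIndepFun σ P)
    (hexp : ∀ i : ℕ, ∀ s : ℝ,
      P {ω | s < σ i ω} = ENNReal.ofReal (exp (-(κ * max s 0))))
    {T : ℝ} (hT : 0 ≤ T) (c : ℝ) (k : ℕ) :
    P ((⋂ i ∈ Icc 1 k, σ i ⁻¹' Set.Iic T) ∩ σ (k + 1) ⁻¹' Set.Ioi (max T (c / κ - k * T)))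
      ≤ ENNReal.ofReal (exp (-c) * (exp (κ * T) - 1) ^ k) := by
  have hbase := one_sub_exp_neg_nonneg (mul_nonneg hκ.le hT)
  have hlast : P (σ (k + 1) ⁻¹' Set.Ioi (max T (c / κ - k * T)))
      = ENNReal.ofReal (exp (-(κ * max T (c / κ - k * T)))) := by
    have h := hexp (k + 1) (max T (c / κ - k * T))
    rwa [max_eq_left (hT.trans (le_max_left _ _))] at h
  rw [hindep.measure_biInter_preimage_inter_preimage (by simp) measurableSet_Iic
      measurableSet_Ioi, hlast,
    prod_congr rfl fun i _ ↦ measure_preimage_Iic_of_exponential (hmeas i) (hexp i) hT,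
    prod_const, Nat.card_Icc, Nat.add_sub_cancel, ← ENNReal.ofReal_pow hbase,
    ← ENNReal.ofReal_mul (by positivity)]
  exact ENNReal.ofReal_le_ofReal (one_sub_exp_neg_pow_mul_exp_neg_le hκ hT c k)

end Exponential

theorem sum_until_first_long_exponential_general
    {Ω : Type*} [MeasurableSpace Ω] (P : Measure Ω) [IsProbabilityMeasure P]
    (κ T : ℝ) (hκ : 0 < κ) (hT : 0 < T)
    (hκT : Real.exp (κ * T) - 1 < 1)
    (σ : ℕ → Ω → ℝ) (hmeas : ∀ i, Measurable (σ i))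
    (hindep : ProbabilityTheory.iIndepFun σ P)
    (hexp : ∀ i : ℕ, ∀ s : ℝ,
      P {ω | s < σ i ω} = ENNReal.ofReal (Real.exp (-(κ * max s 0))))
    (t : ℝ) :
    P {ω | ∃ n : ℕ, 1 ≤ n ∧ (∀ i, 1 ≤ i → i < n → σ i ω ≤ T) ∧ T < σ n ω ∧
        t / κ < ∑ i ∈ Finset.Icc 1 n, σ i ω}
      ≤ ENNReal.ofReal (Real.exp (-t) / (1 - (Real.exp (κ * T) - 1))) := by
  have hsub : {ω | ∃ n : ℕ, 1 ≤ n ∧ (∀ i, 1 ≤ i → i < n → σ i ω ≤ T) ∧ T < σ n ω ∧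
        t / κ < ∑ i ∈ Finset.Icc 1 n, σ i ω}
      ⊆ ⋃ k : ℕ, (⋂ i ∈ Icc 1 k, σ i ⁻¹' Set.Iic T) ∩
          σ (k + 1) ⁻¹' Set.Ioi (max T (t / κ - k * T)) := by
    rintro ω ⟨n, hn, hle, hlt, hsum⟩
    obtain ⟨k, hprefix, hlast⟩ := exists_forall_le_and_max_lt_of_lt_sum_Icc hn hle hlt hsum
    exact Set.mem_iUnion.2 ⟨k, Set.mem_iInter₂.2 hprefix, hlast⟩
  have hr₀ : 0 ≤ exp (κ * T) - 1 := sub_nonneg.2 (one_le_exp (mul_pos hκ hT).le)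
  calc _ ≤ _ := measure_mono hsub
    _ ≤ ∑' k : ℕ, _ := measure_iUnion_le _
    _ ≤ ∑' k : ℕ, ENNReal.ofReal (exp (-t) * (exp (κ * T) - 1) ^ k) :=
      ENNReal.tsum_le_tsum fun k ↦
        measure_forall_le_and_lt_le_of_exponential hκ hmeas hindep hexp hT.le t k
    _ = _ := tsum_ofReal_mul_geometric (exp_nonneg _) hr₀ hκT

/-- Lemma 6.1: if `σ_1, σ_2, …` are i.i.d. exponential of rate `κ`, `T > 0` with
`e^{κT} − 1 < 1`, and `N = min{i ≥ 1 : σ_i > T}`, then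
`P(σ_1 + ⋯ + σ_N > t/κ) ≤ e^{−t}/(1 − (e^{κT} − 1))` for all `t ≥ 0`. -/
theorem sum_until_first_long_exponential
    {Ω : Type*} [MeasurableSpace Ω] (P : Measure Ω) [IsProbabilityMeasure P]
    (κ T : ℝ) (hκ : 0 < κ) (hT : 0 < T)
    (hκT : Real.exp (κ * T) - 1 < 1)
    (σ : ℕ → Ω → ℝ) (hmeas : ∀ i, Measurable (σ i))
    (hindep : ProbabilityTheory.iIndepFun σ P)
    (hexp : ∀ i : ℕ, ∀ s : ℝ,
      P {ω | s < σ i ω} = ENNReal.ofReal (Real.exp (-(κ * max s 0))))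
    (t : ℝ) (ht : 0 ≤ t) :
    P {ω | ∃ n : ℕ, 1 ≤ n ∧ (∀ i, 1 ≤ i → i < n → σ i ω ≤ T) ∧ T < σ n ω ∧
        t / κ < ∑ i ∈ Finset.Icc 1 n, σ i ω}
      ≤ ENNReal.ofReal (Real.exp (-t) / (1 - (Real.exp (κ * T) - 1))) :=
  sum_until_first_long_exponential_general P κ T hκ hT hκT σ hmeas hindep hexp t
end

section
/- γ_d ≥ 2α/(e·d·l·(l+1)), i.e. 1/γ_d ≤ d·l·(l+1)/(2α/e). -/
open Finset

noncomputable section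

/-- Mean of `f` with respect to the weight `μ` on a finite type. -/
def meanOf {n : Type*} [Fintype n] (μ : n → ℝ) (f : n → ℝ) : ℝ := ∑ x, μ x * f x

/-- Variance of `f` with respect to the weight `μ` on a finite type. -/
def varOf {n : Type*} [Fintype n] (μ : n → ℝ) (f : n → ℝ) : ℝ :=
  ∑ x, μ x * (f x - meanOf μ f) ^ 2

/-- Dirichlet form of the kernel `P` reversible w.r.t. `μ`. -/
def dirOf {n : Type*} [Fintype n] (P : Matrix n n ℝ) (μ : n → ℝ) (f : n → ℝ) : ℝ :=
  (1 / 2) * ∑ x, ∑ y, μ x * P x y * (f x - f y) ^ 2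

/-- Spectral gap of the kernel `P` reversible w.r.t. `μ`:
`min { D(f)/Var_μ(f) : Var_μ(f) ≠ 0 }`. -/
def gapOf {n : Type*} [Fintype n] (P : Matrix n n ℝ) (μ : n → ℝ) : ℝ :=
  sInf {r : ℝ | ∃ f : n → ℝ, varOf μ f ≠ 0 ∧ r = dirOf P μ f / varOf μ f}

/-- The box `{0,…,l}^d`. -/
def Box (d l : ℕ) : Type := Fin d → Fin (l + 1)

instance (d l : ℕ) : Fintype (Box d l) := by unfold Box; infer_instance
instance (d l : ℕ) : DecidableEq (Box d l) := by unfold Box; infer_instance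

/-- Nearest-neighbour adjacency in the box: `|x − y|₁ = 1`. -/
def adjB {d l : ℕ} (x y : Box d l) : Prop :=
  (∑ i, ((x i : ℤ) - (y i : ℤ)).natAbs) = 1

instance {d l : ℕ} (x y : Box d l) : Decidable (adjB x y) := by
  unfold adjB; infer_instance

/-- The nearest-neighbour random walk kernel on the box, with jump rate `α`. -/
def pBox (d l : ℕ) (α : ℝ) : Matrix (Box d l) (Box d l) ℝ :=
  fun x y =>
    if x = y then 1 - α * (Finset.univ.filter fun z : Box d l => adjB x z).card
    else if adjB x y then α else 0

/-! The uniform variance of `f` is `∑ x, ∑ y, (f x - f y)² / (2N²)` and the Dirichlet form of the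
walk is `α / (2N)` times the same double sum restricted to neighbouring pairs, so the bound is a
Poincaré inequality for the grid graph on `{0,…,l}^d`. On the path `{0,…,l}` it follows from
telescoping and Cauchy–Schwarz, with constant `l(l+1)²/2`. The grid in dimension `d + 1` is the box
product of a path with the grid in dimension `d`, and tensorization of the variance carries the
constant `l(l+1)^(d+1)/2` through the dimensions. This gives `γ_d ≥ 2α/(l(l+1))`, which is stronger
than the claimed bound. -/

variable {ι κ : Type*} [Fintype ι] [Fintype κ]

def sqDiffSum (f : ι → ℝ) : ℝ := ∑ x, ∑ y, (f x - f y) ^ 2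

lemma sqDiffSum_eq (f : ι → ℝ) :
    sqDiffSum f = 2 * Fintype.card ι * ∑ x, f x ^ 2 - 2 * (∑ x, f x) ^ 2 := by
  simp only [sqDiffSum, sub_sq, sum_add_distrib, sum_sub_distrib, sum_const, card_univ,
    nsmul_eq_mul, ← mul_sum, ← sum_mul, mul_assoc]
  ring

lemma sqDiffSum_comp_equiv (e : κ ≃ ι) (f : ι → ℝ) : sqDiffSum (f ∘ e) = sqDiffSum f := by
  unfold sqDiffSum
  exact Fintype.sum_equiv e _ _ fun x => Fintype.sum_equiv e _ _ fun y => rfl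

lemma sqDiffSum_sum_le (F : ι → κ → ℝ) :
    sqDiffSum (fun b => ∑ a, F a b) ≤ Fintype.card ι * ∑ a, sqDiffSum (F a) := by
  calc sqDiffSum (fun b => ∑ a, F a b)
      ≤ ∑ b, ∑ b', Fintype.card ι * ∑ a, (F a b - F a b') ^ 2 := by
        refine sum_le_sum fun b _ => sum_le_sum fun b' _ => ?_
        simpa only [sum_sub_distrib, card_univ] using
          sq_sum_le_card_mul_sum_sq (s := univ) (f := fun a => F a b - F a b')
    _ = Fintype.card ι * ∑ a, sqDiffSum (F a) := by
        simp only [sqDiffSum, ← mul_sum]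
        exact congrArg _ ((sum_congr rfl fun b _ => sum_comm).trans sum_comm)

lemma sqDiffSum_prod (F : ι → κ → ℝ) :
    sqDiffSum (fun p : ι × κ => F p.1 p.2)
      = Fintype.card κ * ∑ b, sqDiffSum (fun a => F a b) + sqDiffSum (fun b => ∑ a, F a b) := by
  simp only [sqDiffSum_eq, Fintype.sum_prod_type, Fintype.card_prod, sum_sub_distrib, ← mul_sum,
    Nat.cast_mul]
  rw [sum_comm (f := fun a b => F a b), sum_comm (f := fun a b => F a b ^ 2)]
  ring

/-- Tensorization of the variance (the Efron–Stein inequality for the uniform measure). -/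
lemma sqDiffSum_prod_le (F : ι → κ → ℝ) :
    sqDiffSum (fun p : ι × κ => F p.1 p.2)
      ≤ Fintype.card κ * ∑ b, sqDiffSum (fun a => F a b)
        + Fintype.card ι * ∑ a, sqDiffSum (F a) := by
  rw [sqDiffSum_prod]
  exact add_le_add le_rfl (sqDiffSum_sum_le F)

namespace SimpleGraph

open Classical in
def dirichletSum (G : SimpleGraph ι) (f : ι → ℝ) : ℝ :=
  ∑ x, ∑ y, if G.Adj x y then (f x - f y) ^ 2 else 0

def HasPoincareConst (G : SimpleGraph ι) (c : ℝ) : Prop :=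
  ∀ f : ι → ℝ, sqDiffSum f ≤ c * G.dirichletSum f

variable {G : SimpleGraph ι} {H : SimpleGraph κ}

lemma dirichletSum_nonneg (f : ι → ℝ) : 0 ≤ G.dirichletSum f :=
  sum_nonneg fun _ _ => sum_nonneg fun _ _ => by split_ifs <;> positivity

lemma dirichletSum_comp_iso (e : H ≃g G) (f : ι → ℝ) :
    H.dirichletSum (f ∘ e) = G.dirichletSum f := by
  classical exact Fintype.sum_equiv e.toEquiv _ _ fun x => Fintype.sum_equiv e.toEquiv _ _ fun y =>
    if_congr e.map_adj_iff.symm rfl rfl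

lemma dirichletSum_boxProd (F : ι × κ → ℝ) :
    (G □ H).dirichletSum F
      = ∑ b, G.dirichletSum (fun a => F (a, b)) + ∑ a, H.dirichletSum (fun b => F (a, b)) := by
  classical
  have hsplit : ∀ p q : ι × κ, (if (G □ H).Adj p q then (F p - F q) ^ 2 else 0)
      = (if p.2 = q.2 then if G.Adj p.1 q.1 then (F p - F q) ^ 2 else 0 else 0)
        + if p.1 = q.1 then if H.Adj p.2 q.2 then (F p - F q) ^ 2 else 0 else 0 := by
    rintro ⟨a, b⟩ ⟨a', b'⟩
    by_cases hG : G.Adj a a' <;> by_cases hH : H.Adj b b' <;> by_cases ha : a = a' <;>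
      by_cases hb : b = b' <;> simp_all
  have hG : ∑ p : ι × κ, ∑ q : ι × κ,
      (if p.2 = q.2 then if G.Adj p.1 q.1 then (F p - F q) ^ 2 else 0 else 0)
        = ∑ b, G.dirichletSum (fun a => F (a, b)) := by
    simp only [Fintype.sum_prod_type, sum_ite_eq, mem_univ, if_true]
    rw [sum_comm]
    rfl
  have hH : ∑ p : ι × κ, ∑ q : ι × κ,
      (if p.1 = q.1 then if H.Adj p.2 q.2 then (F p - F q) ^ 2 else 0 else 0)
        = ∑ a, H.dirichletSum (fun b => F (a, b)) := by
    simp only [Fintype.sum_prod_type_right, sum_ite_eq, mem_univ, if_true]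
    rw [sum_comm]
    rfl
  rw [dirichletSum, ← hG, ← hH, ← sum_add_distrib]
  exact sum_congr rfl fun p _ => by
    rw [← sum_add_distrib]
    exact sum_congr rfl fun q _ => hsplit p q

theorem HasPoincareConst.of_iso {c : ℝ} (e : H ≃g G) (h : H.HasPoincareConst c) :
    G.HasPoincareConst c := fun f =>
  calc sqDiffSum f = sqDiffSum (f ∘ e) := (sqDiffSum_comp_equiv e.toEquiv f).symm
    _ ≤ c * H.dirichletSum (f ∘ e) := h _
    _ = c * G.dirichletSum f := by rw [dirichletSum_comp_iso]

theorem HasPoincareConst.boxProd {c c' : ℝ} (hG : G.HasPoincareConst c)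
    (hH : H.HasPoincareConst c') :
    (G □ H).HasPoincareConst (max (Fintype.card κ * c) (Fintype.card ι * c')) := fun F => by
  set M := max (Fintype.card κ * c) (Fintype.card ι * c')
  calc sqDiffSum F = sqDiffSum (fun p : ι × κ => F (p.1, p.2)) := rfl
    _ ≤ Fintype.card κ * ∑ b, sqDiffSum (fun a => F (a, b))
        + Fintype.card ι * ∑ a, sqDiffSum (fun b => F (a, b)) :=
      sqDiffSum_prod_le fun a b => F (a, b)
    _ ≤ Fintype.card κ * ∑ b, c * G.dirichletSum (fun a => F (a, b))
        + Fintype.card ι * ∑ a, c' * H.dirichletSum (fun b => F (a, b)) := by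
      gcongr with b _ a _
      exacts [hG _, hH _]
    _ = Fintype.card κ * c * ∑ b, G.dirichletSum (fun a => F (a, b))
        + Fintype.card ι * c' * ∑ a, H.dirichletSum (fun b => F (a, b)) := by
      simp only [← mul_sum, mul_assoc]
    _ ≤ M * ∑ b, G.dirichletSum (fun a => F (a, b))
        + M * ∑ a, H.dirichletSum (fun b => F (a, b)) := by
      gcongr
      exacts [sum_nonneg fun _ _ => dirichletSum_nonneg _, le_max_left _ _,
        sum_nonneg fun _ _ => dirichletSum_nonneg _, le_max_right _ _]
    _ = M * (G □ H).dirichletSum F := by rw [dirichletSum_boxProd, mul_add]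

end SimpleGraph

open SimpleGraph

lemma Fin.sum_univ_sum_univ_eq_sum_range_sum_range {M : Type*} [AddCommMonoid M]
    (h : ℕ → ℕ → M) (l : ℕ) :
    ∑ i : Fin l, ∑ j : Fin l, h i j = ∑ m ∈ range l, ∑ n ∈ range l, h m n := by
  simp only [Fin.sum_univ_eq_sum_range (h _)]
  exact Fin.sum_univ_eq_sum_range (fun m => ∑ n ∈ range l, h m n) l

lemma sq_sub_le_mul_sum_Ico (u : ℕ → ℝ) {m n : ℕ} (h : m ≤ n) :
    (u n - u m) ^ 2 ≤ (n - m : ℕ) * ∑ k ∈ Ico m n, (u (k + 1) - u k) ^ 2 := by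
  rw [← sum_Ico_sub u h, ← Nat.card_Ico]
  exact sq_sum_le_card_mul_sum_sq

lemma sum_range_sum_range_sq_sub_le (u : ℕ → ℝ) (l : ℕ) :
    ∑ m ∈ range (l + 1), ∑ n ∈ range (l + 1), (u m - u n) ^ 2
      ≤ l * (l + 1) ^ 2 * ∑ k ∈ range l, (u (k + 1) - u k) ^ 2 := by
  set S := ∑ k ∈ range l, (u (k + 1) - u k) ^ 2
  have hle : ∀ m n, m ≤ n → n ≤ l → (u n - u m) ^ 2 ≤ l * S := fun m n hmn hnl =>
    calc (u n - u m) ^ 2 ≤ (n - m : ℕ) * ∑ k ∈ Ico m n, (u (k + 1) - u k) ^ 2 :=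
          sq_sub_le_mul_sum_Ico u hmn
      _ ≤ l * S :=
          mul_le_mul (by exact_mod_cast (by omega : n - m ≤ l))
            (sum_le_sum_of_subset_of_nonneg
              (fun k hk => by simp only [mem_Ico, mem_range] at hk ⊢; omega)
              fun _ _ _ => sq_nonneg _)
            (sum_nonneg fun _ _ => sq_nonneg _) (Nat.cast_nonneg _)
  calc ∑ m ∈ range (l + 1), ∑ n ∈ range (l + 1), (u m - u n) ^ 2
      ≤ ∑ m ∈ range (l + 1), ∑ n ∈ range (l + 1), (l * S) := by
        refine sum_le_sum fun m hm => sum_le_sum fun n hn => ?_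
        rw [mem_range] at hm hn
        rcases le_total m n with h | h
        · rw [sub_sq_comm]; exact hle m n h (by omega)
        · exact hle n m h (by omega)
    _ = l * (l + 1) ^ 2 * S := by simp only [sum_const, card_range, nsmul_eq_mul]; push_cast; ring

lemma pathGraph_dirichletSum (u : ℕ → ℝ) (l : ℕ) :
    (pathGraph (l + 1)).dirichletSum (fun i => u i)
      = 2 * ∑ k ∈ range l, (u (k + 1) - u k) ^ 2 := by
  classical
  have hsplit : ∀ m n : ℕ, (if m + 1 = n ∨ n + 1 = m then (u m - u n) ^ 2 else 0)
      = (if m + 1 = n then (u m - u n) ^ 2 else 0) + if n + 1 = m then (u n - u m) ^ 2 else 0 := by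
    intro m n
    by_cases h : m + 1 = n
    · rw [if_pos (Or.inl h), if_pos h, if_neg (by omega)]; ring
    · by_cases h' : n + 1 = m
      · rw [if_pos (Or.inr h'), if_neg h, if_pos h']; ring
      · rw [if_neg (by omega), if_neg h, if_neg h']; ring
  have hfwd : ∑ m ∈ range (l + 1), ∑ n ∈ range (l + 1), (if m + 1 = n then (u m - u n) ^ 2 else 0)
      = ∑ k ∈ range l, (u (k + 1) - u k) ^ 2 := by
    simp only [sum_ite_eq, mem_range]
    rw [sum_range_succ, if_neg (by omega), add_zero]
    exact sum_congr rfl fun k hk => by rw [if_pos (by simpa using hk), sub_sq_comm]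
  calc (pathGraph (l + 1)).dirichletSum (fun i => u i)
      = ∑ i : Fin (l + 1), ∑ j : Fin (l + 1),
          if (i : ℕ) + 1 = j ∨ (j : ℕ) + 1 = i then (u i - u j) ^ 2 else 0 :=
        sum_congr rfl fun i _ => sum_congr rfl fun j _ =>
          if_congr pathGraph_adj rfl rfl
    _ = ∑ m ∈ range (l + 1), ∑ n ∈ range (l + 1),
          if m + 1 = n ∨ n + 1 = m then (u m - u n) ^ 2 else 0 :=
        Fin.sum_univ_sum_univ_eq_sum_range_sum_range
          (fun m n => if m + 1 = n ∨ n + 1 = m then (u m - u n) ^ 2 else 0) (l + 1)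
    _ = 2 * ∑ k ∈ range l, (u (k + 1) - u k) ^ 2 := by
        simp only [hsplit, sum_add_distrib]
        rw [sum_comm (f := fun m n => if n + 1 = m then (u n - u m) ^ 2 else 0), hfwd]
        ring

theorem pathGraph_hasPoincareConst (l : ℕ) :
    (pathGraph (l + 1)).HasPoincareConst (l * (l + 1) ^ 2 / 2) := fun g => by
  obtain ⟨u, rfl⟩ : ∃ u : ℕ → ℝ, g = fun i : Fin (l + 1) => u i :=
    ⟨fun n => if h : n < l + 1 then g ⟨n, h⟩ else 0, funext fun i => by simp [i.isLt]⟩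
  rw [pathGraph_dirichletSum, sqDiffSum,
    Fin.sum_univ_sum_univ_eq_sum_range_sum_range (fun m n => (u m - u n) ^ 2)]
  linarith [sum_range_sum_range_sq_sub_le u l]

lemma card_box (d l : ℕ) : Fintype.card (Box d l) = (l + 1) ^ d := by
  simp [Box]

lemma adjB_comm {d l : ℕ} (x y : Box d l) : adjB x y ↔ adjB y x := by
  unfold adjB
  rw [sum_congr rfl fun i _ => show ((x i : ℤ) - y i).natAbs = ((y i : ℤ) - x i).natAbs by omega]

lemma adjB_cons {d l : ℕ} (a a' : Fin (l + 1)) (b b' : Fin d → Fin (l + 1)) :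
    adjB (Fin.cons a b : Box (d + 1) l) (Fin.cons a' b')
      ↔ ((a : ℤ) - a').natAbs = 1 ∧ b = b' ∨ adjB b b' ∧ a = a' := by
  have hb : (∑ i, ((b i : ℤ) - b' i).natAbs) = 0 ↔ b = b' := by
    simp only [sum_eq_zero_iff, mem_univ, true_implies, Int.natAbs_eq_zero, sub_eq_zero,
      Nat.cast_inj]
    exact ⟨fun h => funext fun i => Fin.ext (h i), fun h i => by rw [h]⟩
  have ha : ((a : ℤ) - a').natAbs = 0 ↔ a = a' := by
    simp [sub_eq_zero, Fin.ext_iff]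
  simp only [adjB, Fin.sum_univ_succ, Fin.cons_zero, Fin.cons_succ]
  rw [← hb, ← ha]
  omega

def boxGraph (d l : ℕ) : SimpleGraph (Box d l) where
  Adj := adjB
  symm := ⟨fun x y => (adjB_comm x y).mp⟩
  loopless := ⟨fun x => by simp [adjB]⟩

def boxGraphConsIso (d l : ℕ) :
    (pathGraph (l + 1)).boxProd (boxGraph d l) ≃g boxGraph (d + 1) l where
  toEquiv := Fin.consEquiv fun _ => Fin (l + 1)
  map_rel_iff' {p q} := by
    obtain ⟨a, b⟩ := p
    obtain ⟨a', b'⟩ := q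
    have ha : ((a : ℤ) - a').natAbs = 1 ↔ (a : ℕ) + 1 = a' ∨ (a' : ℕ) + 1 = a := by omega
    simp only [boxGraph, boxProd_adj, pathGraph_adj, ← ha]
    exact adjB_cons a a' b b'

theorem boxGraph_hasPoincareConst (d l : ℕ) :
    (boxGraph d l).HasPoincareConst (l * (l + 1) ^ (d + 1) / 2) := by
  induction d with
  | zero =>
    intro f
    have hf : sqDiffSum f = 0 := sum_eq_zero fun x _ => sum_eq_zero fun y _ => by
      rw [show x = y from funext fun i => i.elim0, sub_self, sq, mul_zero]
    rw [hf]
    exact mul_nonneg (by positivity) (dirichletSum_nonneg f)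
  | succ d ih =>
    have h := ((pathGraph_hasPoincareConst l).boxProd ih).of_iso (boxGraphConsIso d l)
    convert h using 1
    rw [card_box, Fintype.card_fin]
    push_cast
    rw [show ((l : ℝ) + 1) ^ d * (l * (l + 1) ^ 2 / 2) = (l + 1) * (l * (l + 1) ^ (d + 1) / 2) by
      ring, max_self]
    ring

lemma varOf_uniform [Nonempty ι] (f : ι → ℝ) :
    varOf (fun _ => 1 / Fintype.card ι) f = sqDiffSum f / (2 * Fintype.card ι ^ 2) := by
  have hN : (Fintype.card ι : ℝ) ≠ 0 := by positivity
  simp only [varOf, meanOf, sqDiffSum_eq, ← mul_sum, sub_sq, sum_add_distrib, sum_sub_distrib,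
    sum_const, card_univ, nsmul_eq_mul, ← sum_mul]
  field_simp
  ring

lemma dirOf_pBox {d l : ℕ} (α c : ℝ) (f : Box d l → ℝ) :
    dirOf (pBox d l α) (fun _ => c) f = c * α / 2 * (boxGraph d l).dirichletSum f := by
  classical
  have hterm : ∀ x y, c * pBox d l α x y * (f x - f y) ^ 2
      = c * α * if (boxGraph d l).Adj x y then (f x - f y) ^ 2 else 0 := by
    intro x y
    by_cases hxy : x = y
    · subst hxy
      simp
    · by_cases hadj : adjB x y <;> simp [pBox, boxGraph, hxy, hadj]
  simp only [dirOf, hterm, ← mul_sum, dirichletSum]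
  ring

lemma exists_varOf_ne_zero [Nontrivial ι] {μ : ι → ℝ} (hμ : ∀ x, 0 < μ x) :
    ∃ f, varOf μ f ≠ 0 := by
  classical
  obtain ⟨x, y, hxy⟩ := exists_pair_ne ι
  set g : ι → ℝ := fun z => if z = x then 1 else 0
  refine ⟨g, fun h => ?_⟩
  have hconst : ∀ z, g z = meanOf μ g := fun z => by
    have hz := (sum_eq_zero_iff_of_nonneg fun z _ => mul_nonneg (hμ z).le (sq_nonneg _)).mp h z
      (mem_univ z)
    exact sub_eq_zero.mp (pow_eq_zero_iff two_ne_zero |>.mp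
      ((mul_eq_zero.mp hz).resolve_left (hμ z).ne'))
  have hxy' := (hconst x).trans (hconst y).symm
  simp only [g, if_pos rfl, if_neg hxy.symm] at hxy'
  exact one_ne_zero hxy'

theorem le_gapOf {P : Matrix ι ι ℝ} {μ : ι → ℝ} {c : ℝ} (hμ : ∀ x, 0 ≤ μ x)
    (hne : ∃ f, varOf μ f ≠ 0) (h : ∀ f, c * varOf μ f ≤ dirOf P μ f) : c ≤ gapOf P μ := by
  obtain ⟨f₀, hf₀⟩ := hne
  refine le_csInf ⟨_, f₀, hf₀, rfl⟩ ?_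
  rintro _ ⟨f, hf, rfl⟩
  have hpos : 0 < varOf μ f :=
    (sum_nonneg fun x _ => mul_nonneg (hμ x) (sq_nonneg _)).lt_of_ne' hf
  exact (le_div_iff₀ hpos).mpr (h f)

theorem mul_varOf_le_dirOf_pBox {d l : ℕ} (hl : 1 ≤ l) {α : ℝ} (hα : 0 ≤ α) (f : Box d l → ℝ) :
    2 * α / (l * (l + 1)) * varOf (fun _ => 1 / ((l : ℝ) + 1) ^ d) f
      ≤ dirOf (pBox d l α) (fun _ => 1 / ((l : ℝ) + 1) ^ d) f := by
  have hN : ((l : ℝ) + 1) ^ d = Fintype.card (Box d l) := by rw [card_box]; push_cast; rfl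
  have : Nonempty (Box d l) := ⟨fun _ => 0⟩
  have hl₀ : (l : ℝ) ≠ 0 := Nat.cast_ne_zero.mpr (by omega)
  rw [dirOf_pBox, hN, varOf_uniform, ← hN]
  calc 2 * α / (l * (l + 1)) * (sqDiffSum f / (2 * (((l : ℝ) + 1) ^ d) ^ 2))
      ≤ 2 * α / (l * (l + 1)) * (l * (l + 1) ^ (d + 1) / 2 * (boxGraph d l).dirichletSum f
          / (2 * (((l : ℝ) + 1) ^ d) ^ 2)) := by
        gcongr
        exact boxGraph_hasPoincareConst d l f
    _ = 1 / ((l : ℝ) + 1) ^ d * α / 2 * (boxGraph d l).dirichletSum f := by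
        field_simp
        ring

theorem box_walk_gap_lower_bound_general
    (d l : ℕ) (hd : 1 ≤ d) (hl : 1 ≤ l)
    (α : ℝ) (hα : 0 < α) :
    gapOf (pBox d l α) (fun _ : Box d l => 1 / (l + 1) ^ d)
      ≥ 2 * α / (Real.exp 1 * d * l * (l + 1)) := by
  have : Nontrivial (Box d l) :=
    ⟨⟨fun _ => 0, fun _ => Fin.last l, fun h => by
      have h0 := congrFun h ⟨0, hd⟩
      simp only [Fin.ext_iff, Fin.val_zero, Fin.val_last] at h0
      omega⟩⟩
  have hed : 1 ≤ Real.exp 1 * d := by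
    nlinarith [Real.add_one_le_exp 1, (by exact_mod_cast hd : (1 : ℝ) ≤ d)]
  calc 2 * α / (Real.exp 1 * d * l * (l + 1))
      ≤ 2 * α / (l * (l + 1)) := by
        rw [mul_assoc (Real.exp 1 * d) (l : ℝ)]
        exact div_le_div_of_nonneg_left (by positivity) (by positivity)
          (le_mul_of_one_le_left (by positivity : (0 : ℝ) ≤ l * (l + 1)) hed)
    _ ≤ gapOf (pBox d l α) (fun _ : Box d l => 1 / (l + 1) ^ d) :=
      le_gapOf (fun _ => by positivity) (exists_varOf_ne_zero fun _ => by positivity)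
        (mul_varOf_le_dirOf_pBox hl hα.le)

/-- Lemma 7.5, first part: the spectral gap of the random walk on `{0,…,l}^d` with
nearest-neighbour rate `α` satisfies `γ_d ≥ 2α/(e·d·l·(l+1))`. -/
theorem box_walk_gap_lower_bound
    (d l : ℕ) (hd : 1 ≤ d) (hl : 1 ≤ l)
    (α : ℝ) (hα : 0 < α) (hα' : α ≤ 1 / (2 * d)) :
    gapOf (pBox d l α) (fun _ : Box d l => 1 / (l + 1) ^ d)
      ≥ 2 * α / (Real.exp 1 * d * l * (l + 1)) :=
  box_walk_gap_lower_bound_general d l hd hl α hα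
end
end
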